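/- arXiv:2012.02214 — 2 statements merged into one kernel-verified Lean document; each statement's English description precedes it below -/
import Mathlib

section
/- Let V be a real uniformly convex Banach space and J : V → ℝ a C¹ functional. Suppose there exist ε > 0 and γ_ε ∈ 𝒫 such that for every γ ∈ 𝒫, max_{t∈[0,1]} J(γ(t)) ≥ max_{t∈[0,1]} J(γ_ε(t)) − √ε · d(γ, γ_ε). Set T_ε = { t̃ ∈ [0,1] : J(γ_ε(t̃)) = max_{t∈[0,1]} J(γ_ε(t)) }. If T_ε is contained in a compact subset of the open interval (0,1), then there exists t_ε ∈ T_ε such that ‖J′_{γ_ε(t_ε)}‖_* ≤ √ε, where J′_x ∈ V* is the Fréchet derivative of J at x and ‖·‖_* is the dual norm on V*. -/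
/-! Suppose every maximizer of `J ∘ γε` had `‖J'‖ > √ε`. A partition of unity gives a continuous
field `X` along the path with `‖X‖ ≤ 1`, vanishing at the endpoints, and `J'(γε t) (X t) > √ε` at
every maximizer. Moving the path to `γε - τ • X` for small `τ > 0` lowers `J` by more than `√ε τ`
near the maximizers (mean value theorem) and keeps it below the maximum elsewhere (continuity and
compactness of `[0,1]`), so the maximum of `J` drops by more than `√ε τ ≥ √ε d(γε - τ • X, γε)`,
against the minimality hypothesis. -/

open Set Filter Topology

theorem StrongDual.exists_norm_le_one_lt_apply {E : Type*} [NormedAddCommGroup E]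
    [NormedSpace ℝ E] (f : StrongDual ℝ E) {c : ℝ} (hc : c < ‖f‖) :
    ∃ w : E, ‖w‖ ≤ 1 ∧ c < f w := by
  obtain ⟨w, hw, hfw⟩ := f.exists_lt_apply_of_lt_opNorm hc
  rcases le_or_gt 0 (f w) with h | h
  · exact ⟨w, hw.le, by rwa [Real.norm_of_nonneg h] at hfw⟩
  · exact ⟨-w, by simpa using hw.le, by rwa [Real.norm_of_nonpos h.le, ← map_neg] at hfw⟩

theorem exists_continuous_pseudoGradient {T E : Type*} [TopologicalSpace T] [NormalSpace T]
    [ParacompactSpace T] [NormedAddCommGroup E] [NormedSpace ℝ E]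
    {f : T → StrongDual ℝ E} (hf : Continuous f) {S Z : Set T} (hS : IsClosed S)
    (hZ : IsClosed Z) (hSZ : Disjoint S Z) {c : ℝ} (hc : ∀ x ∈ S, c < ‖f x‖) :
    ∃ v : C(T, E), (∀ x, ‖v x‖ ≤ 1) ∧ (∀ x ∈ S, c < f x (v x)) ∧ ∀ x ∈ Z, v x = 0 := by
  -- The constraints at each point cut out a convex set, so a partition of unity glues locally
  -- constant choices.
  let C : T → Set E := fun x =>
    Metric.closedBall 0 1 ∩ (⋂ _ : x ∈ S, {w | c < f x w}) ∩ ⋂ _ : x ∈ Z, {0}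
  have hC : ∀ x, Convex ℝ (C x) := fun x =>
    ((convex_closedBall 0 1).inter
      (convex_iInter fun _ => convex_halfSpace_gt (f x).isLinear c)).inter
        (convex_iInter fun _ => convex_singleton 0)
  obtain ⟨v, hv⟩ := exists_continuous_forall_mem_convex_of_local_const hC fun x => by
    by_cases hx : x ∈ S
    · obtain ⟨w, hw, hxw⟩ := (f x).exists_norm_le_one_lt_apply (hc x hx)
      refine ⟨w, ?_⟩
      filter_upwards [hZ.isOpen_compl.mem_nhds (hSZ.notMem_of_mem_left hx),
        continuousAt_const.eventually_lt (hf.clm_apply continuous_const).continuousAt hxw]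
        with y hyZ hy
      exact ⟨⟨by simpa using hw, mem_iInter.2 fun _ => hy⟩, mem_iInter.2 fun h => absurd h hyZ⟩
    · refine ⟨0, ?_⟩
      filter_upwards [hS.isOpen_compl.mem_nhds hx] with y hy
      exact ⟨⟨by simp, mem_iInter.2 fun h => absurd h hy⟩, mem_iInter.2 fun _ => rfl⟩
  simp only [C, mem_inter_iff, mem_iInter, Metric.mem_closedBall, dist_zero_right] at hv
  exact ⟨v, fun x => (hv x).1.1, fun x hx => (hv x).1.2 hx, fun x hx => (hv x).2 hx⟩

theorem apply_sub_smul_lt_of_lt_fderiv {V : Type*} [NormedAddCommGroup V] [NormedSpace ℝ V]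
    {J : V → ℝ} (hJ : Differentiable ℝ J) {x w : V} {c τ : ℝ} (hτ : 0 < τ)
    (h : ∀ s ∈ Ioo 0 τ, c < fderiv ℝ J (x - s • w) w) : J (x - τ • w) < J x - c * τ := by
  have hderiv : ∀ s : ℝ, HasDerivAt (fun s => J (x - s • w)) (-fderiv ℝ J (x - s • w) w) s :=
    fun s => by
      have := (hJ _).hasFDerivAt.comp_hasDerivAt s (((hasDerivAt_id' s).smul_const w).const_sub x)
      rw [one_smul, map_neg] at this
      exact this
  obtain ⟨s, hs, hslope⟩ := exists_hasDerivAt_eq_slope _ _ hτ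
    (fun s _ => (hderiv s).continuousAt.continuousWithinAt) fun s _ => hderiv s
  rw [zero_smul, sub_zero, sub_zero, eq_div_iff hτ.ne'] at hslope
  nlinarith [h s hs]

theorem Continuous.ciSup_lt_of_forall_lt {T : Type*} [TopologicalSpace T] [CompactSpace T]
    [Nonempty T] {f : T → ℝ} (hf : Continuous f) {a : ℝ} (h : ∀ t, f t < a) :
    ⨆ t, f t < a := by
  obtain ⟨t₀, -, ht₀⟩ := isCompact_univ.exists_isMaxOn univ_nonempty hf.continuousOn
  exact (ciSup_le fun t => ht₀ (mem_univ t)).trans_lt (h t₀)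

section Deformation

variable {T V : Type*} [TopologicalSpace T] [NormedAddCommGroup V] [NormedSpace ℝ V]
  {J : V → ℝ} {γ X : T → V} {M c : ℝ}

theorem eventually_deform_lt_of_lt (hJ : Continuous J) (hγ : Continuous γ) (hX : Continuous X)
    {t₀ : T} (ht₀ : J (γ t₀) < M) :
    ∀ᶠ z : ℝ × T in 𝓝 (0, t₀), J (γ z.2 - z.1 • X z.2) < M - c * z.1 := by
  have hF : Continuous fun z : ℝ × T => J (γ z.2 - z.1 • X z.2) + c * z.1 := by fun_prop
  filter_upwards [hF.continuousAt.eventually_lt continuousAt_const (by simpa using ht₀)]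
    with z hz
  linarith

theorem eventually_deform_lt_of_lt_fderiv (hJ : ContDiff ℝ 1 J) (hγ : Continuous γ)
    (hX : Continuous X) (hM : ∀ t, J (γ t) ≤ M) {t₀ : T}
    (ht₀ : c < fderiv ℝ J (γ t₀) (X t₀)) :
    ∀ᶠ z : ℝ × T in 𝓝 (0, t₀), 0 < z.1 → J (γ z.2 - z.1 • X z.2) < M - c * z.1 := by
  have hH : Continuous fun z : ℝ × T => fderiv ℝ J (γ z.2 - z.1 • X z.2) (X z.2) :=
    ((hJ.continuous_fderiv one_ne_zero).comp (by fun_prop)).clm_apply (hX.comp continuous_snd)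
  have hev :=
    continuousAt_const.eventually_lt (hH.continuousAt (x := (0, t₀))) (by simpa using ht₀)
  rw [nhds_prod_eq] at hev ⊢
  obtain ⟨p, hp, q, hq, hpq⟩ := eventually_prod_iff.1 hev
  obtain ⟨r, hr, hpr⟩ := Metric.eventually_nhds_iff.1 hp
  filter_upwards [prod_mem_prod (Metric.ball_mem_nhds 0 hr) hq] with ⟨τ, t⟩ ⟨hτr, ht⟩ hτ
  dsimp only at hτr ht hτ ⊢
  rw [Metric.mem_ball, Real.dist_0_eq_abs, abs_lt] at hτr
  have hsegment : ∀ s ∈ Ioo 0 τ, c < fderiv ℝ J (γ t - s • X t) (X t) := fun s hs =>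
    hpq (hpr (by rw [Real.dist_0_eq_abs, abs_lt]; constructor <;> linarith [hs.1, hs.2])) ht
  linarith [apply_sub_smul_lt_of_lt_fderiv (hJ.differentiable one_ne_zero) hτ hsegment, hM t]

theorem eventually_forall_deform_lt [CompactSpace T] (hJ : ContDiff ℝ 1 J) (hγ : Continuous γ)
    (hX : Continuous X) (hM : ∀ t, J (γ t) ≤ M)
    (hc : ∀ t, J (γ t) = M → c < fderiv ℝ J (γ t) (X t)) :
    ∀ᶠ τ in 𝓝[>] 0, ∀ t, J (γ t - τ • X t) < M - c * τ := by
  rw [eventually_nhdsWithin_iff]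
  have hloc := isCompact_univ.eventually_forall_of_forall_eventually
    (P := fun τ t => 0 < τ → J (γ t - τ • X t) < M - c * τ) fun t _ => by
      rcases (hM t).lt_or_eq with ht | ht
      · exact (eventually_deform_lt_of_lt hJ.continuous hγ hX ht).mono fun _ h _ => h
      · exact eventually_deform_lt_of_lt_fderiv hJ hγ hX hM (hc t ht)
  exact hloc.mono fun τ h hτ t => h t (mem_univ t) hτ

end Deformation

theorem mountain_pass_gradient_bound_general
    {V : Type*} [NormedAddCommGroup V] [NormedSpace ℝ V]
    (J : V → ℝ) (hJ : ContDiff ℝ 1 J)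
    (P₁ P₂ : V)
    (ε : ℝ)
    (γε : C(unitInterval, V)) (hγε0 : γε 0 = P₁) (hγε1 : γε 1 = P₂)
    (hmin : ∀ γ : C(unitInterval, V), γ 0 = P₁ → γ 1 = P₂ →
      (⨆ t : unitInterval, J (γε t)) - Real.sqrt ε * dist γ γε ≤
        ⨆ t : unitInterval, J (γ t))
    (hT : ∃ K : Set unitInterval, IsCompact K ∧ (∀ t ∈ K, (t : ℝ) ∈ Ioo (0:ℝ) 1) ∧
      {t : unitInterval | J (γε t) = ⨆ s : unitInterval, J (γε s)} ⊆ K) :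
    ∃ tε : unitInterval, J (γε tε) = (⨆ s : unitInterval, J (γε s)) ∧
      ‖fderiv ℝ J (γε tε)‖ ≤ Real.sqrt ε := by
  set M := ⨆ s : unitInterval, J (γε s)
  have hJγ : Continuous fun t => J (γε t) := hJ.continuous.comp γε.continuous
  have hM : ∀ t, J (γε t) ≤ M := fun t => le_ciSup (isCompact_range hJγ).bddAbove t
  by_contra! hgrad
  obtain ⟨K, -, hKIoo, hTK⟩ := hT
  have hends : Disjoint {t | J (γε t) = M} {0, 1} := by
    refine disjoint_left.2 fun t ht ht01 => ?_
    have := hKIoo t (hTK ht)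
    rcases ht01 with rfl | rfl <;> simp at this
  obtain ⟨X, hX1, hXT, hX01⟩ := exists_continuous_pseudoGradient
    ((hJ.continuous_fderiv one_ne_zero).comp γε.continuous) (isClosed_eq hJγ continuous_const)
    (toFinite _).isClosed hends hgrad
  obtain ⟨τ, hτ, hτpos⟩ :=
    ((eventually_forall_deform_lt hJ γε.continuous X.continuous hM hXT).and
      self_mem_nhdsWithin).exists
  set γτ : C(unitInterval, V) := γε - τ • X
  have hdist : dist γτ γε ≤ τ := by
    refine (ContinuousMap.dist_le hτpos.le).2 fun t => ?_
    simpa [γτ, norm_smul, abs_of_pos hτpos] using mul_le_of_le_one_right hτpos.le (hX1 t)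
  have hsup : ⨆ t, J (γτ t) < M - Real.sqrt ε * τ :=
    (hJ.continuous.comp γτ.continuous).ciSup_lt_of_forall_lt hτ
  have hγτ := hmin γτ (by simp [γτ, hX01, hγε0]) (by simp [γτ, hX01, hγε1])
  linarith [mul_le_mul_of_nonneg_left hdist (Real.sqrt_nonneg ε)]

/-- **Lemma 5.3 (grad-D).** Let `V` be a real uniformly convex Banach space and
`J : V → ℝ` a `C¹` functional. Fix two distinct points `P₁ ≠ P₂` of `V` and let `𝒫`
be the space of continuous paths `γ : [0,1] → V` with `γ 0 = P₁`, `γ 1 = P₂`, with the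
sup metric `d`.  Suppose there are `ε > 0` and `γε ∈ 𝒫` such that for all `γ ∈ 𝒫`,
`max J∘γ ≥ max J∘γε − √ε ⬝ d(γ, γε)`.  If the set `Tε` of maximizers of `J ∘ γε` is
contained in a compact subset of the open interval `(0,1)`, then there is `tε ∈ Tε`
with `‖J'(γε tε)‖ ≤ √ε`. -/
theorem mountain_pass_gradient_bound
    {V : Type*} [NormedAddCommGroup V] [NormedSpace ℝ V] [CompleteSpace V]
    [UniformConvexSpace V]
    (J : V → ℝ) (hJ : ContDiff ℝ 1 J)
    (P₁ P₂ : V) (hP : P₁ ≠ P₂)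
    (ε : ℝ) (hε : 0 < ε)
    (γε : C(unitInterval, V)) (hγε0 : γε 0 = P₁) (hγε1 : γε 1 = P₂)
    (hmin : ∀ γ : C(unitInterval, V), γ 0 = P₁ → γ 1 = P₂ →
      (⨆ t : unitInterval, J (γε t)) - Real.sqrt ε * dist γ γε ≤
        ⨆ t : unitInterval, J (γ t))
    (hT : ∃ K : Set unitInterval, IsCompact K ∧ (∀ t ∈ K, (t : ℝ) ∈ Ioo (0:ℝ) 1) ∧
      {t : unitInterval | J (γε t) = ⨆ s : unitInterval, J (γε s)} ⊆ K) :
    ∃ tε : unitInterval, J (γε tε) = (⨆ s : unitInterval, J (γε s)) ∧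
      ‖fderiv ℝ J (γε tε)‖ ≤ Real.sqrt ε :=
  mountain_pass_gradient_bound_general J hJ P₁ P₂ ε γε hγε0 hγε1 hmin hT
end

section
/- Let (X, μ) be a measure space, E a complex Hilbert space, and p ≥ 2 a real number. Then the map τ : L^p(X, E; μ) → L^{p/2}(X, ℝ; μ) defined pointwise by τ(F)(x) = ⟨F(x), F(x)⟩ = ‖F(x)‖² is infinitely Fréchet differentiable (as a map of real Banach spaces), with first derivative τ′_F[ζ] = 2 Re⟨F, ζ⟩ (pointwise), second derivative τ″_F[ζ₁, ζ₂] = 2 Re⟨ζ₁, ζ₂⟩ (pointwise), and all higher derivatives vanishing; moreover the maps F ↦ τ′_F and F ↦ τ″_F are continuous from L^p(X, E; μ) into the spaces of bounded linear (respectively bounded bilinear) maps into L^{p/2}(X, ℝ; μ), endowed with the operator norms. -/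
set_option maxHeartbeats 1000000

open MeasureTheory ENNReal

namespace SqNormMapLpAux

variable {X : Type*} [MeasurableSpace X] {μ : Measure X}
  {E : Type*} [NormedAddCommGroup E] [InnerProductSpace ℂ E]
  {q r : ℝ≥0∞} [Fact (1 ≤ q)] [Fact (1 ≤ r)]

lemma re_inner_smul_left (c : ℝ) (v w : E) :
    (inner ℂ (c • v) w : ℂ).re = c * (inner ℂ v w : ℂ).re := by
  rw [RCLike.real_smul_eq_coe_smul (K := ℂ) c v, inner_smul_real_left]
  simp [Complex.smul_re]

lemma re_inner_smul_right (c : ℝ) (v w : E) :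
    (inner ℂ v (c • w) : ℂ).re = c * (inner ℂ v w : ℂ).re := by
  rw [RCLike.real_smul_eq_coe_smul (K := ℂ) c w, inner_smul_real_right]
  simp [Complex.smul_re]

lemma re_inner_symm' (v w : E) : (inner ℂ v w : ℂ).re = (inner ℂ w v : ℂ).re := by
  rw [← inner_conj_symm v w, Complex.conj_re]

lemma memℒp_inner (hqr : 1 / r = 1 / q + 1 / q) (F G : Lp E q μ) :
    MemLp (fun x => (inner ℂ ((F : X → E) x) ((G : X → E) x) : ℂ).re) r μ := by
  have hbound : ∀ᵐ x ∂μ, ‖(fun v w : E => (inner ℂ v w : ℂ).re) ((F : X → E) x) ((G : X → E) x)‖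
      ≤ ‖(F : X → E) x‖ * ‖(G : X → E) x‖ := by
    refine Filter.Eventually.of_forall fun x => ?_
    calc ‖(inner ℂ ((F : X → E) x) ((G : X → E) x) : ℂ).re‖
        ≤ ‖(inner ℂ ((F : X → E) x) ((G : X → E) x) : ℂ)‖ := by
          rw [Real.norm_eq_abs]
          exact Complex.abs_re_le_norm _
      _ ≤ ‖(F : X → E) x‖ * ‖(G : X → E) x‖ := norm_inner_le_norm _ _
  refine ⟨Complex.continuous_re.comp_aestronglyMeasurable
    ((Lp.aestronglyMeasurable F).inner (Lp.aestronglyMeasurable G)), ?_⟩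
  calc eLpNorm (fun x => (inner ℂ ((F : X → E) x) ((G : X → E) x) : ℂ).re) r μ
      ≤ eLpNorm (F : X → E) q μ * eLpNorm (G : X → E) q μ := by
        haveI : ENNReal.HolderTriple q q r := ⟨by simpa only [one_div] using hqr.symm⟩
        simpa only [ENNReal.coe_one, one_mul] using
          eLpNorm_le_eLpNorm_mul_eLpNorm'_of_norm (Lp.aestronglyMeasurable F)
          (Lp.aestronglyMeasurable G) (fun v w => (inner ℂ v w : ℂ).re) 1
          (by simpa only [NNReal.coe_one, one_mul] using hbound)
    _ < ⊤ := ENNReal.mul_lt_top (Lp.eLpNorm_lt_top F) (Lp.eLpNorm_lt_top G)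

variable (hqr : 1 / r = 1 / q + 1 / q)

/-- The pointwise real inner product of two `L^q` functions, as an element of `L^r`. -/
noncomputable def innerLp (F G : Lp E q μ) : Lp ℝ r μ := (memℒp_inner hqr F G).toLp _

lemma coeFn_innerLp (F G : Lp E q μ) :
    (innerLp hqr F G : X → ℝ) =ᵐ[μ]
      fun x => (inner ℂ ((F : X → E) x) ((G : X → E) x) : ℂ).re :=
  MemLp.coeFn_toLp _

lemma norm_innerLp_le (F G : Lp E q μ) : ‖innerLp hqr F G‖ ≤ ‖F‖ * ‖G‖ := by
  rw [innerLp, Lp.norm_toLp, Lp.norm_def, Lp.norm_def, ← ENNReal.toReal_mul]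
  refine ENNReal.toReal_mono ?_ ?_
  · exact ENNReal.mul_ne_top (Lp.eLpNorm_ne_top F) (Lp.eLpNorm_ne_top G)
  · haveI : ENNReal.HolderTriple q q r := ⟨by simpa only [one_div] using hqr.symm⟩
    simpa only [ENNReal.coe_one, one_mul] using
      eLpNorm_le_eLpNorm_mul_eLpNorm'_of_norm (Lp.aestronglyMeasurable F)
      (Lp.aestronglyMeasurable G) (fun v w => (inner ℂ v w : ℂ).re) 1
      (by simpa only [NNReal.coe_one, one_mul] using
      (Filter.Eventually.of_forall (f := ae μ) fun x => by
        calc ‖(inner ℂ ((F : X → E) x) ((G : X → E) x) : ℂ).re‖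
            ≤ ‖(inner ℂ ((F : X → E) x) ((G : X → E) x) : ℂ)‖ := by
              rw [Real.norm_eq_abs]; exact Complex.abs_re_le_norm _
          _ ≤ ‖(F : X → E) x‖ * ‖(G : X → E) x‖ := norm_inner_le_norm _ _))

lemma innerLp_add_left (F F' G : Lp E q μ) :
    innerLp hqr (F + F') G = innerLp hqr F G + innerLp hqr F' G := by
  apply Lp.ext
  filter_upwards [coeFn_innerLp hqr (F + F') G, coeFn_innerLp hqr F G,
    coeFn_innerLp hqr F' G, Lp.coeFn_add (innerLp hqr F G) (innerLp hqr F' G),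
    Lp.coeFn_add F F'] with x h1 h2 h3 h4 h5
  rw [h1, h4, Pi.add_apply, h2, h3, h5, Pi.add_apply, inner_add_left, Complex.add_re]

lemma innerLp_smul_left (c : ℝ) (F G : Lp E q μ) :
    innerLp hqr (c • F) G = c • innerLp hqr F G := by
  apply Lp.ext
  filter_upwards [coeFn_innerLp hqr (c • F) G, coeFn_innerLp hqr F G,
    Lp.coeFn_smul c (innerLp hqr F G), Lp.coeFn_smul c F] with x h1 h2 h3 h4
  rw [h1, h3, Pi.smul_apply, h2, h4, Pi.smul_apply, re_inner_smul_left, smul_eq_mul]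

lemma innerLp_add_right (F G G' : Lp E q μ) :
    innerLp hqr F (G + G') = innerLp hqr F G + innerLp hqr F G' := by
  apply Lp.ext
  filter_upwards [coeFn_innerLp hqr F (G + G'), coeFn_innerLp hqr F G,
    coeFn_innerLp hqr F G', Lp.coeFn_add (innerLp hqr F G) (innerLp hqr F G'),
    Lp.coeFn_add G G'] with x h1 h2 h3 h4 h5
  rw [h1, h4, Pi.add_apply, h2, h3, h5, Pi.add_apply, inner_add_right, Complex.add_re]

lemma innerLp_smul_right (c : ℝ) (F G : Lp E q μ) :
    innerLp hqr F (c • G) = c • innerLp hqr F G := by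
  apply Lp.ext
  filter_upwards [coeFn_innerLp hqr F (c • G), coeFn_innerLp hqr F G,
    Lp.coeFn_smul c (innerLp hqr F G), Lp.coeFn_smul c G] with x h1 h2 h3 h4
  rw [h1, h3, Pi.smul_apply, h2, h4, Pi.smul_apply, re_inner_smul_right, smul_eq_mul]

/-- The pointwise real inner product as a continuous bilinear map on `L^q`. -/
noncomputable def innerCLM : Lp E q μ →L[ℝ] Lp E q μ →L[ℝ] Lp ℝ r μ :=
  LinearMap.mkContinuous₂
    (LinearMap.mk₂ ℝ (innerLp hqr) (innerLp_add_left hqr) (innerLp_smul_left hqr)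
      (innerLp_add_right hqr) (innerLp_smul_right hqr)) 1
    (fun F G => by simpa using norm_innerLp_le hqr F G)

lemma innerCLM_apply (F G : Lp E q μ) : innerCLM hqr F G = innerLp hqr F G := rfl

lemma innerCLM_symm (F G : Lp E q μ) : innerCLM hqr F G = innerCLM hqr G F := by
  rw [innerCLM_apply, innerCLM_apply]
  apply Lp.ext
  filter_upwards [coeFn_innerLp hqr F G, coeFn_innerLp hqr G F] with x h1 h2
  rw [h1, h2, re_inner_symm']

end SqNormMapLpAux

open SqNormMapLpAux

/-- **Lemma 3.1 (i) (mapLp).** For a measure space `(X, μ)`, a complex Hilbert space `E`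
and a real number `p ≥ 2`, the squared-norm map
`τ : L^p(X, E; μ) → L^{p/2}(X, ℝ; μ)`, `τ(F) = ‖F‖² = ⟨F, F⟩` (pointwise), is `C^∞`,
with `τ'_F[ζ] = 2 Re⟨F, ζ⟩`, `τ''_F[ζ₁, ζ₂] = 2 Re⟨ζ₁, ζ₂⟩` (pointwise), all higher
derivatives vanishing, and the maps `F ↦ τ'_F`, `F ↦ τ''_F` continuous into the spaces
of bounded linear (resp. bilinear) maps with their operator norms. -/
theorem squared_norm_map_Lp_smooth
    {X : Type*} [MeasurableSpace X] (μ : Measure X)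
    {E : Type*} [NormedAddCommGroup E] [InnerProductSpace ℂ E] [CompleteSpace E]
    (p : ℝ) (hp : 2 ≤ p)
    [Fact (1 ≤ ENNReal.ofReal p)] [Fact (1 ≤ ENNReal.ofReal (p / 2))] :
    ∃ τ : Lp E (ENNReal.ofReal p) μ → Lp ℝ (ENNReal.ofReal (p / 2)) μ,
      (∀ F, (τ F : X → ℝ) =ᵐ[μ] fun x => ‖(F : X → E) x‖ ^ 2) ∧
      ContDiff ℝ (⊤ : ℕ∞) τ ∧
      (∀ F ζ, (fderiv ℝ τ F ζ : X → ℝ) =ᵐ[μ]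
          fun x => 2 * (inner ℂ ((F : X → E) x) ((ζ : X → E) x) : ℂ).re) ∧
      (∀ F ζ₁ ζ₂, (fderiv ℝ (fderiv ℝ τ) F ζ₁ ζ₂ : X → ℝ) =ᵐ[μ]
          fun x => 2 * (inner ℂ ((ζ₁ : X → E) x) ((ζ₂ : X → E) x) : ℂ).re) ∧
      (∀ n : ℕ, 3 ≤ n → ∀ F, iteratedFDeriv ℝ n τ F = 0) ∧
      Continuous (fun F => fderiv ℝ τ F) ∧
      Continuous (fun F => fderiv ℝ (fderiv ℝ τ) F) := by
  have hp0 : (0 : ℝ) < p := lt_of_lt_of_le two_pos hp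
  have hq0 : ENNReal.ofReal p ≠ 0 := by
    simp [ENNReal.ofReal_eq_zero, not_le, hp0]
  have hqt : ENNReal.ofReal p ≠ ⊤ := ENNReal.ofReal_ne_top
  have hqr : 1 / ENNReal.ofReal (p / 2) = 1 / ENNReal.ofReal p + 1 / ENNReal.ofReal p := by
    simp only [one_div]
    rw [ENNReal.ofReal_div_of_pos two_pos, show ENNReal.ofReal (2 : ℝ) = 2 by norm_num,
      ENNReal.inv_div (Or.inl (by norm_num)) (Or.inl (by norm_num)),
      div_eq_mul_inv, two_mul]
  set B : Lp E (ENNReal.ofReal p) μ →L[ℝ] Lp E (ENNReal.ofReal p) μ →L[ℝ]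
      Lp ℝ (ENNReal.ofReal (p / 2)) μ := innerCLM hqr with hB
  have hcoe : ∀ F G : Lp E (ENNReal.ofReal p) μ, (B F G : X → ℝ) =ᵐ[μ]
      fun x => (inner ℂ ((F : X → E) x) ((G : X → E) x) : ℂ).re := by
    intro F G; rw [hB]; exact coeFn_innerLp hqr F G
  have hsymm : ∀ F G : Lp E (ENNReal.ofReal p) μ, B F G = B G F := by
    intro F G; rw [hB]; exact innerCLM_symm hqr F G
  have hasF : ∀ F, HasFDerivAt (fun G => B G G) ((B + B.flip) F) F := by
    intro F
    have hdiag : HasFDerivAt (fun G : Lp E (ENNReal.ofReal p) μ => (G, G))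
        ((ContinuousLinearMap.id ℝ _).prod (ContinuousLinearMap.id ℝ _)) F :=
      (hasFDerivAt_id F).prodMk (hasFDerivAt_id F)
    have h := HasFDerivAt.comp (f := fun G : Lp E (ENNReal.ofReal p) μ => (G, G))
      (x := F) (B.isBoundedBilinearMap.hasFDerivAt (F, F)) hdiag
    have heq : ((B + B.flip) F)
        = (B.isBoundedBilinearMap.deriv (F, F)).comp
            ((ContinuousLinearMap.id ℝ _).prod (ContinuousLinearMap.id ℝ _)) := by
      refine ContinuousLinearMap.ext fun ζ => ?_
      simp [IsBoundedBilinearMap.deriv_apply, ContinuousLinearMap.add_apply,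
        ContinuousLinearMap.flip_apply, ContinuousLinearMap.comp_apply,
        ContinuousLinearMap.prod_apply, ContinuousLinearMap.coe_id']
    rw [heq]
    exact h
  have hfd : fderiv ℝ (fun G => B G G) = fun F => (B + B.flip) F :=
    funext fun F => (hasF F).fderiv
  have hfd2 : ∀ F, fderiv ℝ (fderiv ℝ (fun G => B G G)) F = B + B.flip := by
    intro F
    rw [hfd]
    exact ContinuousLinearMap.fderiv (𝕜 := ℝ)
      (F := Lp E (ENNReal.ofReal p) μ →L[ℝ] Lp ℝ (ENNReal.ofReal (p / 2)) μ)
      (f := B + B.flip) (x := F)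
  refine ⟨fun F => B F F, ?_, ?_, ?_, ?_, ?_, ?_, ?_⟩
  · -- value
    intro F
    filter_upwards [hcoe F F] with x h
    rw [h]
    simpa using inner_self_eq_norm_sq (𝕜 := ℂ) ((F : X → E) x)
  · -- smoothness
    exact (B.isBoundedBilinearMap.contDiff).comp (contDiff_id.prodMk contDiff_id)
  · -- first derivative
    intro F ζ
    have e1 : fderiv ℝ (fun G => B G G) F ζ = B F ζ + B F ζ := by
      rw [hfd]
      simp only [ContinuousLinearMap.add_apply, ContinuousLinearMap.flip_apply]
      rw [hsymm ζ F]
    rw [e1]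
    filter_upwards [Lp.coeFn_add (B F ζ) (B F ζ), hcoe F ζ] with x h1 h2
    rw [h1, Pi.add_apply, h2, two_mul]
  · -- second derivative
    intro F ζ₁ ζ₂
    have e1 : fderiv ℝ (fderiv ℝ (fun G => B G G)) F ζ₁ ζ₂ = B ζ₁ ζ₂ + B ζ₁ ζ₂ := by
      rw [hfd2]
      simp only [ContinuousLinearMap.add_apply, ContinuousLinearMap.flip_apply]
      rw [hsymm ζ₂ ζ₁]
    rw [e1]
    filter_upwards [Lp.coeFn_add (B ζ₁ ζ₂) (B ζ₁ ζ₂), hcoe ζ₁ ζ₂] with x h1 h2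
    rw [h1, Pi.add_apply, h2, two_mul]
  · -- higher derivatives vanish
    have h2const : ∀ F, iteratedFDeriv ℝ 2 (fun G => B G G) F
        = iteratedFDeriv ℝ 2 (fun G => B G G) 0 := by
      intro F
      ext m
      rw [iteratedFDeriv_two_apply, iteratedFDeriv_two_apply, hfd2, hfd2]
    have key : ∀ m F, iteratedFDeriv ℝ (m + 3) (fun G => B G G) F = 0 := by
      intro m
      induction m with
      | zero =>
        intro F
        refine ContinuousMultilinearMap.ext fun v => ?_
        have hz : fderiv ℝ (iteratedFDeriv ℝ 2 (fun G => B G G)) F = 0 := by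
          rw [funext h2const]
          exact fderiv_const_apply _
        have e : iteratedFDeriv ℝ (0 + 3) (fun G => B G G) F v
            = (fderiv ℝ (iteratedFDeriv ℝ 2 (fun G => B G G)) F) (v 0) (Fin.tail v) :=
          iteratedFDeriv_succ_apply_left v
        rw [e, hz]
        simp
      | succ k ih =>
        intro F
        refine ContinuousMultilinearMap.ext fun v => ?_
        have hz : fderiv ℝ (iteratedFDeriv ℝ (k + 3) (fun G => B G G)) F = 0 := by
          rw [funext ih]
          exact fderiv_const_apply _
        have e : iteratedFDeriv ℝ (k + 1 + 3) (fun G => B G G) F v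
            = (fderiv ℝ (iteratedFDeriv ℝ (k + 3) (fun G => B G G)) F) (v 0) (Fin.tail v) :=
          iteratedFDeriv_succ_apply_left v
        rw [e, hz]
        simp
    intro n hn F
    obtain ⟨m, rfl⟩ : ∃ m, n = m + 3 := ⟨n - 3, by omega⟩
    exact key m F
  · -- continuity of first derivative
    rw [hfd]
    exact (B + B.flip).continuous
  · -- continuity of second derivative
    have : (fun F => fderiv ℝ (fderiv ℝ (fun G => B G G)) F)
        = fun _ => B + B.flip := funext hfd2
    rw [this]
    exact continuous_const
end
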